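/- arXiv:1206.3105 — 4 statements merged into one kernel-verified Lean document; each statement's English description precedes it below -/
import Mathlib

section
/- Let n ≥ 1 and k ≥ 3 be integers and let t > 0. If (x,y) and (x',y') are points of ℝⁿ×ℝ with y ≥ 0, y' ≥ 0, ‖x‖² = y^k, ‖x'‖² = y'^k, and both points have Euclidean norm equal to t (i.e., ‖x‖² + y² = t² and ‖x'‖² + y'² = t²), then y = y' and ‖(x,y) − (x',y')‖ ≤ 2·t^{k/2}, where t^{k/2} denotes the real power rpow t (k/2). (Hence the diameter of the t-link of the horn X_k^n(ℝ) tends to 0 faster than linearly as t → 0 when k > 2.) -/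
/-- For `k ≥ 3` and `t > 0`, two points of the horn `X_k^n(ℝ)` lying on the
sphere of radius `t` have the same last coordinate and Euclidean distance at most `2·t^{k/2}`. -/
theorem stmt_1 (n k : ℕ) (hn : 1 ≤ n) (hk : 3 ≤ k) (t : ℝ) (ht : 0 < t)
    (x x' : EuclideanSpace ℝ (Fin n)) (y y' : ℝ)
    (hy : 0 ≤ y) (hy' : 0 ≤ y')
    (hx : ‖x‖ ^ 2 = y ^ k) (hx' : ‖x'‖ ^ 2 = y' ^ k)
    (hxt : ‖x‖ ^ 2 + y ^ 2 = t ^ 2) (hx't : ‖x'‖ ^ 2 + y' ^ 2 = t ^ 2) :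
    y = y' ∧ Real.sqrt (‖x - x'‖ ^ 2 + (y - y') ^ 2) ≤ 2 * t ^ ((k : ℝ) / 2) := by
  have hk0 : k ≠ 0 := by omega
  have heq : y ^ k + y ^ 2 = y' ^ k + y' ^ 2 := by
    rw [← hx, ← hx', hxt, hx't]
  have hyy : y = y' := by
    rcases lt_trichotomy y y' with h | h | h
    · have h1 : y ^ k < y' ^ k := pow_lt_pow_left₀ h hy hk0
      have h2 : y ^ 2 < y' ^ 2 := pow_lt_pow_left₀ h hy two_ne_zero
      linarith
    · exact h
    · have h1 : y' ^ k < y ^ k := pow_lt_pow_left₀ h hy' hk0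
      have h2 : y' ^ 2 < y ^ 2 := pow_lt_pow_left₀ h hy' two_ne_zero
      linarith
  refine ⟨hyy, ?_⟩
  have hyt : y ≤ t := by
    nlinarith [norm_nonneg x, sq_nonneg (y - t), sq_nonneg (y + t)]
  have hyk : y ^ k ≤ t ^ k := pow_le_pow_left₀ hy hyt k
  have htk : (0:ℝ) ≤ t ^ k := pow_nonneg ht.le k
  have hrpow : t ^ ((k : ℝ) / 2) = Real.sqrt (t ^ k) := by
    rw [Real.sqrt_eq_rpow, ← Real.rpow_natCast t k, ← Real.rpow_mul ht.le]
    ring_nf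
  have hnx : ‖x‖ ≤ Real.sqrt (t ^ k) := by
    rw [← Real.sqrt_sq (norm_nonneg x)]
    exact Real.sqrt_le_sqrt (by rw [hx]; exact hyk)
  have hnx' : ‖x'‖ ≤ Real.sqrt (t ^ k) := by
    rw [← Real.sqrt_sq (norm_nonneg x')]
    refine Real.sqrt_le_sqrt ?_
    rw [hx', ← hyy]
    exact hyk
  have hsub : ‖x - x'‖ ≤ 2 * Real.sqrt (t ^ k) := by
    calc ‖x - x'‖ ≤ ‖x‖ + ‖x'‖ := norm_sub_le x x'
    _ ≤ 2 * Real.sqrt (t ^ k) := by linarith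
  rw [hyy, sub_self, hrpow]
  calc Real.sqrt (‖x - x'‖ ^ 2 + 0 ^ 2)
      = ‖x - x'‖ := by
        rw [show (0:ℝ) ^ 2 = 0 by ring, add_zero, Real.sqrt_sq (norm_nonneg _)]
    _ ≤ 2 * Real.sqrt (t ^ k) := hsub
end

section
/- Let E be a finite-dimensional real normed vector space, let Y ⊆ E, and let v ∈ E be such that the tangent cone of Y at 0 is contained in the half-line {s • v : s ∈ ℝ, s ≥ 0}. Then for every ε > 0 there exists δ > 0 such that for all a, b ∈ Y with ‖a‖ = ‖b‖ and ‖a‖ ≤ δ one has ‖a − b‖ ≤ ε·‖a‖. (That is, if the tangent cone of Y at the origin is a single real half-line, then the diameter of the t-link of Y tends to 0 faster than linearly as t → 0; this is the key estimate in the proof that a metrically conic germ admits no choking horn.) -/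
/-!
The unit directions `‖a‖⁻¹ • a` of points `a ∈ Y \ {0}` lie on the compact unit sphere, and each of
their cluster points as `a → 0` is a unit vector of the tangent cone, hence the unique unit vector
`‖v‖⁻¹ • v` of the half-line. So these directions converge, and two points of the same norm `t`
are at distance `t` times the distance of their directions, which is `o(1)`.
-/

open Filter Topology Metric

section UnitDirections

variable {E : Type*} [NormedAddCommGroup E] [NormedSpace ℝ E]

theorem mem_tangentConeAt_of_mapClusterPt_inv_norm_smul {S : Set E} {p : E}
    (h : MapClusterPt p (𝓝[S \ {0}] 0) fun a ↦ ‖a‖⁻¹ • a) : p ∈ tangentConeAt ℝ S 0 := by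
  obtain ⟨U, hU, hUp⟩ := mapClusterPt_iff_ultrafilter.1 h
  refine mem_tangentConeAt_of_seq (U : Filter E) (fun a ↦ ‖a‖⁻¹) id
    (hU.trans nhdsWithin_le_nhds) ?_ hUp
  filter_upwards [hU self_mem_nhdsWithin] with a ha
  simpa using ha.1

theorem eq_inv_norm_smul_of_norm_smul_eq_one {s : ℝ} {v : E} (hs : 0 ≤ s) (h : ‖s • v‖ = 1) :
    s • v = ‖v‖⁻¹ • v := by
  rw [norm_smul, Real.norm_of_nonneg hs] at h
  rw [eq_inv_of_mul_eq_one_left h]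

theorem tendsto_inv_norm_smul_of_tangentConeAt_subset_halfLine [FiniteDimensional ℝ E]
    {Y : Set E} {v : E} (hT : tangentConeAt ℝ Y 0 ⊆ {w : E | ∃ s : ℝ, 0 ≤ s ∧ w = s • v}) :
    Tendsto (fun a ↦ ‖a‖⁻¹ • a) (𝓝[Y \ {0}] 0) (𝓝 (‖v‖⁻¹ • v)) := by
  refine (isCompact_sphere (0 : E) 1).tendsto_nhds_of_unique_mapClusterPt ?_ fun p hp hcl ↦ ?_
  · filter_upwards [self_mem_nhdsWithin] with a ha
    exact mem_sphere_zero_iff_norm.2 (norm_smul_inv_norm ha.2)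
  · obtain ⟨s, hs, rfl⟩ := hT (mem_tangentConeAt_of_mapClusterPt_inv_norm_smul hcl)
    exact eq_inv_norm_smul_of_norm_smul_eq_one hs (mem_sphere_zero_iff_norm.1 hp)

theorem norm_sub_eq_norm_mul_dist_inv_norm_smul {a b : E} (hab : ‖a‖ = ‖b‖) :
    ‖a - b‖ = ‖a‖ * dist (‖a‖⁻¹ • a) (‖b‖⁻¹ • b) := by
  rcases eq_or_ne a 0 with rfl | ha
  · obtain rfl : b = 0 := by simpa [eq_comm] using hab
    simp
  rw [← hab, dist_eq_norm, ← smul_sub, norm_smul, Real.norm_of_nonneg (by positivity),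
    mul_inv_cancel_left₀ (norm_ne_zero_iff.2 ha)]

end UnitDirections

/-- If the tangent cone at `0` of a subset `Y` of a finite-dimensional real
normed space is contained in a half-line `{s • v : s ≥ 0}`, then the diameter of the
`t`-link of `Y` tends to `0` faster than linearly as `t → 0`. -/
theorem stmt_3 (E : Type*) [NormedAddCommGroup E] [NormedSpace ℝ E] [FiniteDimensional ℝ E]
    (Y : Set E) (v : E)
    (hT : tangentConeAt ℝ Y 0 ⊆ {w : E | ∃ s : ℝ, 0 ≤ s ∧ w = s • v}) :
    ∀ ε > 0, ∃ δ > 0, ∀ a ∈ Y, ∀ b ∈ Y, ‖a‖ = ‖b‖ → ‖a‖ ≤ δ → ‖a - b‖ ≤ ε * ‖a‖ := by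
  intro ε hε
  obtain ⟨δ, hδ, hdir⟩ := tendsto_nhdsWithin_nhds.1
    (tendsto_inv_norm_smul_of_tangentConeAt_subset_halfLine hT) (ε / 2) (half_pos hε)
  refine ⟨δ / 2, half_pos hδ, fun a ha b hb hab haδ ↦ ?_⟩
  rcases eq_or_ne a 0 with rfl | ha0
  · obtain rfl : b = 0 := by simpa [eq_comm] using hab
    simp
  have hb0 : b ≠ 0 := norm_ne_zero_iff.1 (hab ▸ norm_ne_zero_iff.2 ha0)
  have hclose : ∀ x ∈ Y, x ≠ 0 → ‖x‖ = ‖a‖ → dist (‖x‖⁻¹ • x) (‖v‖⁻¹ • v) < ε / 2 :=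
    fun x hx hx0 hxa ↦ hdir ⟨hx, hx0⟩ (by rw [dist_zero_right, hxa]; linarith)
  calc ‖a - b‖ = ‖a‖ * dist (‖a‖⁻¹ • a) (‖b‖⁻¹ • b) := norm_sub_eq_norm_mul_dist_inv_norm_smul hab
    _ ≤ ‖a‖ * (dist (‖a‖⁻¹ • a) (‖v‖⁻¹ • v) + dist (‖b‖⁻¹ • b) (‖v‖⁻¹ • v)) := by
      gcongr; exact dist_triangle_right _ _ _
    _ ≤ ‖a‖ * (ε / 2 + ε / 2) := by
      gcongr
      exacts [(hclose a ha ha0 rfl).le, (hclose b hb hb0 hab.symm).le]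
    _ = ε * ‖a‖ := by ring
end

section
/- Let n ≥ 3 and a ≥ 2 be integers, let a₃,…,aₙ be integers with a_i > a for each 3 ≤ i ≤ n, and let 0 < ε < 1. Let X = {z ∈ ℂⁿ : z₁^a + z₂^a + Σ_{i=3}^n z_i^{a_i} = 0} and let Z be the closure in ℂⁿ of the set {z ∈ X : Σ_{i=3}^n |z_i|^{a_i} > ε·(|z₁|^a + |z₂|^a)}. Then the tangent cone of Z at the origin equals {z ∈ ℂⁿ : z₁ = 0 and z₂ = 0}. -/
/-!
On the thin locus `ε (|z₁|^a + |z₂|^a)` is dominated by `∑_{i≥3} |z_i|^{a_i}`, all of whose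
exponents exceed `a`. Along `c_m • d_m → v` with `d_m → 0`, multiplying by `|c_m|^a` bounds the
left side, which tends to `ε (|v₁|^a + |v₂|^a)`, by `∑ |c_m d_{m,i}|^a · |d_{m,i}|^{a_i - a} → 0`.

Conversely, for `v` with `v₁ = v₂ = 0` put `u(t) = t v + t² e₃` and pick `r(t)` with
`r(t)^a = -∑_{i≥3} u(t)_i^{a_i}`. The right side is `o(t^a)`, so `r(t) = o(t)` and
`t ↦ u(t) + r(t) e₁` is a curve on `X` with velocity `v` at `0`. It lies in the thin locus since
`|r(t)|^a ≤ ∑_{i≥3} |u(t)_i|^{a_i}`, the latter is positive thanks to the `t² e₃` term, and `ε < 1`.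
-/

open Filter Topology Asymptotics

section TangentCone

variable {𝕜 E : Type*} [NontriviallyNormedField 𝕜] [NormedAddCommGroup E] [NormedSpace 𝕜 E]

theorem tangentConeAt_subset_ker_of_norm_pow_le {F G ι : Type*} [NormedAddCommGroup F]
    [NormedSpace 𝕜 F] [NormedAddCommGroup G] [NormedSpace 𝕜 G] {s : Set E}
    (ℓ : E →L[𝕜] F) (ψ : ι → E →L[𝕜] G) (T : Finset ι) {a : ℕ} {e : ι → ℕ}
    (he : ∀ i ∈ T, a < e i) (C : ℝ) (hs : ∀ x ∈ s, ‖ℓ x‖ ^ a ≤ C * ∑ i ∈ T, ‖ψ i x‖ ^ e i) :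
    tangentConeAt 𝕜 s 0 ⊆ (LinearMap.ker (ℓ : E →ₗ[𝕜] F) : Set E) := by
  intro v hv
  obtain ⟨α, l, hl, c, d, hd₀, hds, hcd⟩ := exists_fun_of_mem_tangentConeAt hv
  have hbound : ∀ᶠ m in l, ‖ℓ (c m • d m)‖ ^ a ≤
      C * ∑ i ∈ T, ‖ψ i (c m • d m)‖ ^ a * ‖ψ i (d m)‖ ^ (e i - a) := by
    filter_upwards [hds] with m hm
    calc ‖ℓ (c m • d m)‖ ^ a = ‖c m‖ ^ a * ‖ℓ (d m)‖ ^ a := by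
          rw [map_smul, norm_smul, mul_pow]
      _ ≤ ‖c m‖ ^ a * (C * ∑ i ∈ T, ‖ψ i (d m)‖ ^ e i) := by
          gcongr; simpa using hs _ hm
      _ = C * ∑ i ∈ T, ‖ψ i (c m • d m)‖ ^ a * ‖ψ i (d m)‖ ^ (e i - a) := by
          rw [mul_left_comm, Finset.mul_sum]
          congr 1
          refine Finset.sum_congr rfl fun i hi => ?_
          rw [map_smul, norm_smul, mul_pow, mul_assoc, ← pow_add,
            Nat.add_sub_cancel' (he i hi).le]
  have hlim_left : Tendsto (fun m => ‖ℓ (c m • d m)‖ ^ a) l (𝓝 (‖ℓ v‖ ^ a)) :=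
    ((ℓ.continuous.tendsto v).comp hcd).norm.pow a
  have hlim_right : Tendsto
      (fun m => C * ∑ i ∈ T, ‖ψ i (c m • d m)‖ ^ a * ‖ψ i (d m)‖ ^ (e i - a)) l (𝓝 0) := by
    have := tendsto_const_nhds (x := C) |>.mul <| tendsto_finsetSum T fun i _ =>
      (((ψ i).continuous.tendsto v).comp hcd).norm.pow a |>.mul
        ((((ψ i).continuous.tendsto 0).comp hd₀).norm.pow (e i - a))
    refine this.trans_eq ?_
    rw [Finset.sum_eq_zero fun i hi => by
      simp [Nat.sub_ne_zero_of_lt (he i hi)], mul_zero]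
  have : ‖ℓ v‖ ^ a ≤ 0 := le_of_tendsto_of_tendsto hlim_left hlim_right hbound
  exact norm_eq_zero.1 (eq_zero_of_pow_eq_zero (this.antisymm (by positivity)))

theorem mem_tangentConeAt_of_isLittleO {s : Set E} {x v : E} {ρ : 𝕜 → E} (hρ : ρ =o[𝓝 0] id)
    (hs : ∀ᶠ t in 𝓝[≠] 0, x + (t • v + ρ t) ∈ s) : v ∈ tangentConeAt 𝕜 s x := by
  refine mem_tangentConeAt_of_seq (𝓝[≠] 0) (fun t => t⁻¹) (fun t => t • v + ρ t) ?_ hs ?_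
  · have := (tendsto_id.smul_const v).add (hρ.trans_tendsto tendsto_id)
    simpa using this.mono_left nhdsWithin_le_nhds
  · have : Tendsto (fun t => v + t⁻¹ • ρ t) (𝓝[≠] 0) (𝓝 v) := by
      simpa using (hρ.mono nhdsWithin_le_nhds).tendsto_inv_smul_nhds_zero.const_add v
    refine this.congr' ?_
    filter_upwards [self_mem_nhdsWithin] with t ht
    simp [smul_add, smul_smul, inv_mul_cancel₀ (show t ≠ 0 from ht)]

end TangentCone

theorem exists_pow_eq_of_isLittleO {α 𝕜 : Type*} [NormedField 𝕜] [IsAlgClosed 𝕜] {l : Filter α}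
    {w : α → 𝕜} {g : α → ℝ} {a : ℕ} (ha : a ≠ 0) (hw : w =o[l] fun x => g x ^ a) :
    ∃ r : α → 𝕜, (∀ x, r x ^ a = w x) ∧ r =o[l] g := by
  choose r hr using fun x => IsAlgClosed.exists_pow_nat_eq (w x) (Nat.pos_of_ne_zero ha)
  exact ⟨r, hr, IsLittleO.of_pow (hw.congr_left fun x => (hr x).symm) ha⟩

theorem isLittleO_sum_pow_of_isBigO {α ι R : Type*} [NormedRing R] [NormOneClass R] {l : Filter α}
    {u : ι → α → R} {g : α → ℝ} (hg : Tendsto g l (𝓝 0)) {T : Finset ι} {a : ℕ} {e : ι → ℕ}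
    (he : ∀ i ∈ T, a < e i) (hu : ∀ i ∈ T, u i =O[l] g) :
    (fun x => ∑ i ∈ T, u i x ^ e i) =o[l] fun x => g x ^ a :=
  IsLittleO.fun_sum fun i hi =>
    ((hu i hi).pow (e i)).trans_isLittleO ((isLittleO_pow_pow (he i hi)).comp_tendsto hg)

section Brieskorn

variable {ι : Type*} [Fintype ι] {a : ℕ} {e : ι → ℕ} {i₀ i₁ : ι} {T : Finset ι} {ε : ℝ}

/-- `i₀`, `i₁` are the two coordinates with exponent `a` and `T` holds the others; the thin part `Z`
is the closure of this set. -/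
def brieskornThinLocus (a : ℕ) (e : ι → ℕ) (i₀ i₁ : ι) (T : Finset ι) (ε : ℝ) :
    Set (EuclideanSpace ℂ ι) :=
  {z | ∑ i, z i ^ e i = 0 ∧ ε * (‖z i₀‖ ^ a + ‖z i₁‖ ^ a) < ∑ i ∈ T, ‖z i‖ ^ e i}

theorem Finset.sum_univ_eq_add_add_sum_of_mem_iff {M : Type*} [AddCommMonoid M] (hi : i₀ ≠ i₁)
    (hT : ∀ i, i ∈ T ↔ i ≠ i₀ ∧ i ≠ i₁) (f : ι → M) :
    ∑ i, f i = f i₀ + f i₁ + ∑ i ∈ T, f i := by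
  classical
  have hT' : T = (univ.erase i₀).erase i₁ := by ext i; simp [hT, and_comm]
  rw [← add_sum_erase _ f (mem_univ i₀), ← add_sum_erase _ f (mem_erase.2 ⟨hi.symm, mem_univ i₁⟩),
    hT', add_assoc]

theorem tangentConeAt_brieskornThinLocus_subset (he : ∀ i ∈ T, a < e i) (hε : 0 < ε) :
    tangentConeAt ℝ (brieskornThinLocus a e i₀ i₁ T ε) 0 ⊆ {z | z i₀ = 0 ∧ z i₁ = 0} := by
  intro v hv
  have hproj : ∀ k, (∀ z ∈ brieskornThinLocus a e i₀ i₁ T ε,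
      ‖z k‖ ^ a ≤ ε⁻¹ * ∑ i ∈ T, ‖z i‖ ^ e i) → v k = 0 := fun k hk => by
    simpa using tangentConeAt_subset_ker_of_norm_pow_le
      ((EuclideanSpace.proj k).restrictScalars ℝ)
      (fun i => (EuclideanSpace.proj i).restrictScalars ℝ) T he ε⁻¹ (by simpa using hk) hv
  refine ⟨hproj i₀ fun z hz => ?_, hproj i₁ fun z hz => ?_⟩ <;>
  · rw [le_inv_mul_iff₀ hε]
    nlinarith [hz.2, pow_nonneg (norm_nonneg (z i₀)) a, pow_nonneg (norm_nonneg (z i₁)) a]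

theorem mem_brieskornThinLocus (hi : i₀ ≠ i₁) (hT : ∀ i, i ∈ T ↔ i ≠ i₀ ∧ i ≠ i₁) (ha : a ≠ 0)
    (he₀ : e i₀ = a) (he₁ : e i₁ = a) (hε : ε < 1) {z : EuclideanSpace ℂ ι}
    (h₀ : z i₀ ^ a = -∑ i ∈ T, z i ^ e i) (h₁ : z i₁ = 0) (hz : ∃ i ∈ T, z i ≠ 0) :
    z ∈ brieskornThinLocus a e i₀ i₁ T ε := by
  have hpos : 0 < ∑ i ∈ T, ‖z i‖ ^ e i := by
    obtain ⟨j, hj, hzj⟩ := hz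
    exact Finset.sum_pos' (fun i _ => by positivity) ⟨j, hj, by positivity⟩
  have hle : ‖z i₀‖ ^ a ≤ ∑ i ∈ T, ‖z i‖ ^ e i := by
    rw [← norm_pow, h₀, norm_neg]
    exact (norm_sum_le _ _).trans_eq (by simp)
  refine ⟨?_, ?_⟩
  · rw [Finset.sum_univ_eq_add_add_sum_of_mem_iff hi hT, he₀, he₁, h₀, h₁, zero_pow ha]
    ring
  · rw [h₁, norm_zero, zero_pow ha, add_zero]
    rcases le_or_gt ε 0 with hε₀ | hε₀ <;> nlinarith [pow_nonneg (norm_nonneg (z i₀)) a]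

theorem subset_tangentConeAt_brieskornThinLocus [DecidableEq ι] (hi : i₀ ≠ i₁)
    (hT : ∀ i, i ∈ T ↔ i ≠ i₀ ∧ i ≠ i₁) (ha : a ≠ 0) (he₀ : e i₀ = a) (he₁ : e i₁ = a)
    (he : ∀ i ∈ T, a < e i) (hTne : T.Nonempty) (hε : ε < 1) :
    {z | z i₀ = 0 ∧ z i₁ = 0} ⊆ tangentConeAt ℝ (brieskornThinLocus a e i₀ i₁ T ε) 0 := by
  rintro v ⟨hv₀, hv₁⟩
  obtain ⟨j, hj⟩ := hTne
  set bump : ℝ → EuclideanSpace ℂ ι := fun t => EuclideanSpace.single j ((t : ℂ) ^ 2)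
  have hbump : bump =o[𝓝 0] id := by
    refine isLittleO_norm_left.1
      ((isLittleO_pow_id (𝕜 := ℝ) one_lt_two).norm_left.congr_left fun t => ?_)
    simp [bump]
  have hline : (fun t : ℝ => t • v) =O[𝓝 0] id :=
    isBigO_of_le' (c := ‖v‖) _ fun t => by simp [norm_smul, mul_comm]
  have htail : ∀ i ∈ T, (fun t => (t • v + bump t) i) =O[𝓝 0] id := fun i _ =>
    (isBigO_of_le _ fun t => PiLp.norm_apply_le (t • v + bump t) i).trans
      (hline.add hbump.isBigO)
  obtain ⟨r, hr, hro⟩ := exists_pow_eq_of_isLittleO ha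
    (isLittleO_sum_pow_of_isBigO tendsto_id he htail).neg_left
  refine mem_tangentConeAt_of_isLittleO (ρ := fun t => bump t + EuclideanSpace.single i₀ (r t))
    (hbump.add (isLittleO_norm_left.1 (hro.norm_left.congr_left fun t => by simp))) ?_
  have hne : ∀ᶠ t : ℝ in 𝓝[≠] 0, v j + t ≠ 0 := by
    rcases eq_or_ne (v j) 0 with h | h
    · filter_upwards [self_mem_nhdsWithin] with t ht
      simpa [h] using ht
    · refine (Tendsto.eventually_ne ?_ h).filter_mono nhdsWithin_le_nhds
      exact (continuous_const.add Complex.continuous_ofReal).tendsto' 0 _ (by simp)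
  obtain ⟨hj₀, hj₁⟩ := (hT j).1 hj
  filter_upwards [hne, self_mem_nhdsWithin] with t hvt ht
  set z := t • v + (bump t + EuclideanSpace.single i₀ (r t))
  have hzT : ∀ i ∈ T, z i = (t • v + bump t) i := fun i hi => by simp [z, ((hT i).1 hi).1]
  rw [zero_add]
  refine mem_brieskornThinLocus hi hT ha he₀ he₁ hε ?_ ?_ ⟨j, hj, ?_⟩
  · rw [Finset.sum_congr rfl fun i hi => by rw [hzT i hi], ← hr]
    simp [z, bump, hv₀, hj₀.symm]
  · simp [z, bump, hv₁, hj₁.symm, hi.symm]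
  · rw [hzT j hj]
    convert mul_ne_zero (Complex.ofReal_ne_zero.2 ht) hvt using 1
    simp [bump]
    ring

theorem tangentConeAt_closure_brieskornThinLocus [DecidableEq ι] (hi : i₀ ≠ i₁)
    (hT : ∀ i, i ∈ T ↔ i ≠ i₀ ∧ i ≠ i₁) (ha : a ≠ 0) (he₀ : e i₀ = a) (he₁ : e i₁ = a)
    (he : ∀ i ∈ T, a < e i) (hTne : T.Nonempty) (hε₀ : 0 < ε) (hε₁ : ε < 1) :
    tangentConeAt ℝ (closure (brieskornThinLocus a e i₀ i₁ T ε)) 0 =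
      {z | z i₀ = 0 ∧ z i₁ = 0} := by
  rw [tangentConeAt_closure]
  exact (tangentConeAt_brieskornThinLocus_subset he hε₀).antisymm
    (subset_tangentConeAt_brieskornThinLocus hi hT ha he₀ he₁ he hTne hε₁)

end Brieskorn

/-- The tangent cone at the origin of the (closure of the) thin part
`Z = closure {z ∈ X : Σ_{i≥3}|z_i|^{a_i} > ε(|z₁|^a+|z₂|^a)}` of the Brieskorn variety
`X = X(a,a,a₃,…,aₙ)` (with `a_i > a` for `i ≥ 3`, `0 < ε < 1`) equals the plane
`{z₁ = z₂ = 0}`. -/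
theorem stmt_12 (n a : ℕ) (hn : 3 ≤ n) (ha : 2 ≤ a)
    (e : Fin n → ℕ) (he0 : e ⟨0, by omega⟩ = a) (he1 : e ⟨1, by omega⟩ = a)
    (he : ∀ i : Fin n, 2 ≤ (i : ℕ) → a < e i)
    (ε : ℝ) (hε0 : 0 < ε) (hε1 : ε < 1) :
    tangentConeAt ℝ
      (closure {z : EuclideanSpace ℂ (Fin n) |
        ∑ i, z i ^ e i = 0 ∧
        ε * (‖z ⟨0, by omega⟩‖ ^ a + ‖z ⟨1, by omega⟩‖ ^ a) <
          ∑ i ∈ Finset.univ.filter (fun i : Fin n => 2 ≤ (i : ℕ)),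
            ‖z i‖ ^ e i}) 0
      = {z : EuclideanSpace ℂ (Fin n) | z ⟨0, by omega⟩ = 0 ∧ z ⟨1, by omega⟩ = 0} :=
  tangentConeAt_closure_brieskornThinLocus (by simp) (fun i => by simp [Fin.ext_iff]; omega)
    (by omega) he0 he1 (fun i hi => he i (by simpa using hi)) ⟨⟨2, by omega⟩, by simp⟩ hε0 hε1
end

section
/- Let n ≥ 1 and k ≥ 3 be integers. The tangent cone at the origin of the Brieskorn hypersurface X_k^n = {(z,w) ∈ ℂⁿ×ℂ : z₁²+⋯+zₙ² = w^k} equals {(z,w) ∈ ℂⁿ×ℂ : z₁²+⋯+zₙ² = 0}; in particular the w-axis {z = 0} is contained in the tangent cone of X_k^n at the origin. -/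
/-!
Write `Q(z) = ∑ zᵢ²`, so that `Q(c • z) = c² Q(z)`. If `dₘ → 0` on the hypersurface and
`cₘ • dₘ → (z, w)`, then `Q(cₘ • dₘ.1) = (cₘ dₘ.2)² · dₘ.2^(k-2) → w² · 0`, hence `Q(z) = 0`.
Conversely, if `Q(z) = 0` pick an index `j` and a root `u(t)` of `u² + 2 zⱼ u = t^(k-2) w^k`
of size `O(|t|^((k-2)/2))`; then `t • (z + u(t) eⱼ, w)` lies on the hypersurface and
`u(t) → 0`, so `(z, w)` is its tangent direction at `t = 0`.
-/

open Filter Topology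

theorem exists_sq_add_mul_eq_and_norm_sq_le (B C : ℂ) :
    ∃ u : ℂ, u ^ 2 + 2 * B * u = C ∧ ‖u‖ ^ 2 ≤ ‖C‖ := by
  obtain ⟨σ, hσ⟩ := IsAlgClosed.exists_pow_nat_eq (B ^ 2 + C) two_pos
  wlog hle : ‖-B + σ‖ ≤ ‖-B - σ‖ generalizing σ
  · exact this (-σ) (by rw [neg_sq, hσ]) (by rw [sub_neg_eq_add, ← sub_eq_add_neg]; linarith)
  -- the two roots `-B ± σ` have product `-C`, so the smaller one has norm at most `√‖C‖`
  refine ⟨-B + σ, by linear_combination hσ, ?_⟩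
  calc ‖-B + σ‖ ^ 2 ≤ ‖-B + σ‖ * ‖-B - σ‖ := by rw [sq]; gcongr
    _ = ‖C‖ := by rw [← norm_mul, show (-B + σ) * (-B - σ) = -C by linear_combination -hσ, norm_neg]

theorem exists_sq_add_mul_eq_tendsto_zero (B : ℂ) :
    ∃ g : ℂ → ℂ, (∀ C, g C ^ 2 + 2 * B * g C = C) ∧ Tendsto g (𝓝 0) (𝓝 0) := by
  choose g hg hle using exists_sq_add_mul_eq_and_norm_sq_le B
  refine ⟨g, hg, tendsto_zero_iff_norm_tendsto_zero.2 <| squeeze_zero (fun _ ↦ norm_nonneg _)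
    (fun C ↦ Real.le_sqrt_of_sq_le (hle C)) ?_⟩
  simpa using (continuous_norm.sqrt.tendsto (0 : ℂ))

theorem mem_tangentConeAt_of_tendsto_nhdsNE {𝕜 E : Type*} [NontriviallyNormedField 𝕜]
    [AddCommGroup E] [Module 𝕜 E] [TopologicalSpace E] [ContinuousSMul 𝕜 E] {s : Set E}
    {x y : E} {v : 𝕜 → E} (hv : Tendsto v (𝓝[≠] 0) (𝓝 y))
    (hmem : ∀ᶠ t in 𝓝[≠] 0, x + t • v t ∈ s) : y ∈ tangentConeAt 𝕜 s x := by
  refine mem_tangentConeAt_of_seq (𝓝[≠] 0) (·⁻¹) (fun t ↦ t • v t) ?_ hmem ?_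
  · simpa using (tendsto_nhdsWithin_of_tendsto_nhds tendsto_id).smul hv
  · exact hv.congr' (eventually_nhdsWithin_of_forall fun t ht ↦ (inv_smul_smul₀ ht _).symm)

def brieskorn (ι : Type*) [Fintype ι] (k : ℕ) : Set (EuclideanSpace ℂ ι × ℂ) :=
  {p | ∑ i, p.1 i ^ 2 = p.2 ^ k}

section Brieskorn

variable {ι : Type*} [Fintype ι]

theorem sum_sq_smul (c : ℝ) (z : EuclideanSpace ℂ ι) :
    ∑ i, (c • z) i ^ 2 = (c : ℂ) ^ 2 * ∑ i, z i ^ 2 := by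
  simp only [PiLp.smul_apply, Complex.real_smul, mul_pow, Finset.mul_sum]

theorem sum_sq_add_smul_single [DecidableEq ι] (z : EuclideanSpace ℂ ι) (j : ι) (u : ℂ) :
    ∑ i, (z + u • EuclideanSpace.single j 1 : EuclideanSpace ℂ ι) i ^ 2 =
      ∑ i, z i ^ 2 + (u ^ 2 + 2 * z j * u) := by
  simp only [PiLp.add_apply, PiLp.smul_apply, PiLp.single_apply, smul_eq_mul, mul_ite, mul_one,
    mul_zero, add_sq, Finset.sum_add_distrib, ite_pow, zero_pow two_ne_zero, Finset.sum_ite_eq',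
    Finset.mem_univ, if_true]
  ring

theorem tangentConeAt_brieskorn_subset {k : ℕ} (hk : 2 < k) :
    tangentConeAt ℝ (brieskorn ι k) 0 ⊆ {p | ∑ i, p.1 i ^ 2 = 0} := by
  intro p hp
  obtain ⟨α, l, hl, c, d, hd, hmem, hcd⟩ := exists_fun_of_mem_tangentConeAt hp
  have hQ : Continuous fun q : EuclideanSpace ℂ ι × ℂ ↦ ∑ i, q.1 i ^ 2 := by fun_prop
  have heq : ∀ᶠ m in l, (c m • d m).2 ^ 2 * (d m).2 ^ (k - 2) = ∑ i, (c m • d m).1 i ^ 2 := by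
    filter_upwards [hmem] with m hm
    rw [zero_add, brieskorn, Set.mem_ofPred_eq] at hm
    rw [Prod.smul_fst, sum_sq_smul, hm, Prod.smul_snd, Complex.real_smul, mul_pow, mul_assoc,
      ← pow_add, Nat.add_sub_cancel' hk.le]
  have hlim := ((continuous_snd.tendsto _).comp hcd).pow 2 |>.mul
    (((continuous_snd.tendsto _).comp hd).pow (k - 2))
  simp only [Prod.snd_zero, zero_pow (Nat.sub_ne_zero_of_lt hk), mul_zero] at hlim
  exact tendsto_nhds_unique ((hQ.tendsto p).comp hcd) (hlim.congr' heq)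

theorem subset_tangentConeAt_brieskorn [Nonempty ι] {k : ℕ} (hk : 2 < k) :
    {p | ∑ i, p.1 i ^ 2 = 0} ⊆ tangentConeAt ℝ (brieskorn ι k) 0 := by
  classical
  rintro ⟨z, w⟩ (hz : ∑ i, z i ^ 2 = 0)
  obtain ⟨j⟩ := ‹Nonempty ι›
  obtain ⟨g, hg, hg0⟩ := exists_sq_add_mul_eq_tendsto_zero (z j)
  let u : ℝ → ℂ := fun t ↦ g ((t : ℂ) ^ (k - 2) * w ^ k)
  have hu : Tendsto u (𝓝[≠] 0) (𝓝 0) := by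
    refine hg0.comp (tendsto_nhdsWithin_of_tendsto_nhds ?_)
    have : Continuous fun t : ℝ ↦ (t : ℂ) ^ (k - 2) * w ^ k := by fun_prop
    simpa [zero_pow (Nat.sub_ne_zero_of_lt hk)] using this.tendsto 0
  let e : EuclideanSpace ℂ ι := EuclideanSpace.single j 1
  refine mem_tangentConeAt_of_tendsto_nhdsNE (v := fun t ↦ (z + u t • e, w)) ?_
    (Eventually.of_forall fun t ↦ ?_)
  · simpa using ((tendsto_const_nhds (x := z)).add (hu.smul_const e)).prodMk_nhds
      (tendsto_const_nhds (x := w))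
  · simp only [zero_add, brieskorn, Set.mem_ofPred_eq, Prod.smul_fst, Prod.smul_snd, sum_sq_smul,
      sum_sq_add_smul_single, hz, hg, u, e, Complex.real_smul]
    rw [← mul_assoc, ← pow_add, Nat.add_sub_cancel' hk.le, mul_pow]

theorem tangentConeAt_brieskorn [Nonempty ι] {k : ℕ} (hk : 2 < k) :
    tangentConeAt ℝ (brieskorn ι k) 0 = {p | ∑ i, p.1 i ^ 2 = 0} :=
  (tangentConeAt_brieskorn_subset hk).antisymm (subset_tangentConeAt_brieskorn hk)

end Brieskorn

/-- For `k ≥ 3`, the tangent cone at the origin of the Brieskorn hypersurface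
`X_k^n = {(z,w) : z₁²+⋯+zₙ² = w^k}` equals `{(z,w) : z₁²+⋯+zₙ² = 0}`; in particular the
`w`-axis `{z = 0}` is contained in the tangent cone. -/
theorem stmt_14 (n k : ℕ) (hn : 1 ≤ n) (hk : 3 ≤ k) :
    tangentConeAt ℝ {p : EuclideanSpace ℂ (Fin n) × ℂ | ∑ i, p.1 i ^ 2 = p.2 ^ k} 0
        = {p : EuclideanSpace ℂ (Fin n) × ℂ | ∑ i, p.1 i ^ 2 = 0} ∧
      {p : EuclideanSpace ℂ (Fin n) × ℂ | p.1 = 0} ⊆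
        tangentConeAt ℝ {p : EuclideanSpace ℂ (Fin n) × ℂ | ∑ i, p.1 i ^ 2 = p.2 ^ k} 0 := by
  have : Nonempty (Fin n) := ⟨⟨0, hn⟩⟩
  have hcone := tangentConeAt_brieskorn (ι := Fin n) hk
  refine ⟨hcone, fun p (hp : p.1 = 0) ↦ ?_⟩
  rw [brieskorn] at hcone
  simp [hcone, hp]
end
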